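/- arXiv:1311.3347 — 4 statements merged into one kernel-verified Lean document; each statement's English description precedes it below -/
import Mathlib

section
/- For every q ≥ 2 and r ≥ 1, the group W = ℤ_q ≀ (ℤ_q × ℤ_{rq}) does not belong to the class R({ℤ_n}_{n≥1}) generated by the family of all finite cyclic groups. -/
/-- The regular wreath product `A ≀ B = Map(B, A) ⋊ B`, where `Map(B, A)` is the group of all
functions `B → A` under pointwise multiplication and `B` acts on it by translation of the
argument. -/
def wreathConj (A B : Type) [Group A] [Group B] : B →* MulAut (B → A) where
  toFun h :=
  { toFun := fun α x => α (x * h)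
    invFun := fun α x => α (x * h⁻¹)
    left_inv := fun α => by funext x; simp
    right_inv := fun α => by funext x; simp
    map_mul' := fun α β => rfl }
  map_one' := by ext α x; simp
  map_mul' := fun h₁ h₂ => by ext α x; simp [mul_assoc]

/-- The (regular) wreath product `A ≀ B`. -/
abbrev Wreath (A B : Type) [Group A] [Group B] : Type := (B → A) ⋊[wreathConj A B] B

/-- The class `R(𝒢)`: the smallest isomorphism-closed class of groups containing the family
`𝒢` and closed under finite direct products and under wreath products from the top by members
of `𝒢`. -/
inductive RClass (𝒢 : (G : Type) → [inst : Group G] → Prop) : (G : Type) → [inst : Group G] → Prop where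
  | base (G : Type) [Group G] : 𝒢 G → RClass 𝒢 G
  | iso (G H : Type) [Group G] [Group H] : RClass 𝒢 G → (G ≃* H) → RClass 𝒢 H
  | prod (A B : Type) [Group A] [Group B] : RClass 𝒢 A → RClass 𝒢 B → RClass 𝒢 (A × B)
  | wreath (A G : Type) [Group A] [Group G] : RClass 𝒢 A → 𝒢 G → RClass 𝒢 (Wreath A G)

/-- The family of all finite cyclic groups. -/
def CyclicFamily (G : Type) [Group G] : Prop := Finite G ∧ IsCyclic G

open SemidirectProduct
open scoped commutatorElement

namespace WreathNotInRClass

/-! ### Generalities on groups -/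

section Generalities

variable {G K : Type} [Group G] [Group K]

theorem mem_commutator_map (e : G ≃* K) {u : G} (hu : u ∈ commutator G) :
    e u ∈ commutator K := by
  have h : Subgroup.map e.toMonoidHom (commutator G) = commutator K := by
    rw [commutator, Subgroup.map_commutator, Subgroup.map_top_of_surjective _ e.surjective,
      commutator]
  rw [← h]
  exact ⟨u, hu, rfl⟩

theorem mem_centralizer_commutator_map (e : G ≃* K) {p : G} :
    e p ∈ Subgroup.centralizer (commutator K : Set K) ↔
      p ∈ Subgroup.centralizer (commutator G : Set G) := by
  constructor
  · intro h
    rw [Subgroup.mem_centralizer_iff]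
    intro u hu
    have := Subgroup.mem_centralizer_iff.1 h (e u) (mem_commutator_map e hu)
    exact e.injective (by simpa [map_mul] using this)
  · intro h
    rw [Subgroup.mem_centralizer_iff]
    intro u hu
    have hu' : e.symm u ∈ commutator G := by
      simpa using mem_commutator_map e.symm hu
    have := Subgroup.mem_centralizer_iff.1 h (e.symm u) hu'
    have := congrArg e this
    simpa [map_mul] using this

theorem mem_commutator_prod_iff {X Y : Type} [Group X] [Group Y] (p : X × Y) :
    p ∈ commutator (X × Y) ↔ p.1 ∈ commutator X ∧ p.2 ∈ commutator Y := by
  rw [commutator, ← Subgroup.top_prod_top, Subgroup.commutator_prod_prod,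
    Subgroup.mem_prod]
  rfl

theorem exists_ne_ne {T : Type} [Finite T] (h3 : 3 ≤ Nat.card T) (a b : T) :
    ∃ s : T, s ≠ a ∧ s ≠ b := by
  by_contra hcon
  push_neg at hcon
  have hsub : (Set.univ : Set T) ⊆ {a, b} := by
    intro s _
    by_cases h : s = a
    · exact Or.inl h
    · exact Or.inr (hcon s h)
  have := Set.ncard_le_ncard hsub (Set.toFinite _)
  rw [Set.ncard_univ] at this
  have h2 : ({a, b} : Set T).ncard ≤ 2 := by
    refine le_trans (Set.ncard_insert_le a {b}) ?_
    simp [Set.ncard_singleton]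
  omega

end Generalities

/-! ### Generalities on wreath products -/

section WreathGeneral

variable {A B : Type} [Group A] [Group B]

theorem wc_apply (h : B) (α : B → A) (x : B) : wreathConj A B h α x = α (x * h) := rfl

theorem eq_inl_of_right_eq_one (u : Wreath A B) (h : u.right = 1) : u = inl u.left := by
  ext
  · rfl
  · exact h

theorem commute_inl_iff (w : Wreath A B) (α : B → A) :
    w * inl α = inl α * w ↔ w.left * wreathConj A B w.right α = α * w.left := by
  constructor
  · intro h
    have := congrArg SemidirectProduct.left h
    simpa using this
  · intro h
    refine SemidirectProduct.ext ?_ (by simp)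
    simpa using h

theorem commutator_inl_inr (γ : B → A) (s : B) :
    ⁅(inl γ : Wreath A B), (inr s : Wreath A B)⁆ = inl (γ * (wreathConj A B s γ)⁻¹) := by
  rw [commutatorElement_def]
  refine SemidirectProduct.ext ?_ ?_
  · simp [mul_left, mul_right, inv_left, inv_right, left_inl, right_inl, left_inr, right_inr,
      map_one, MulAut.one_apply, one_mul, mul_one, inv_one, map_inv]
  · simp [mul_right, inv_right, right_inl, right_inr, one_mul, mul_one]

theorem commutator_le_ker (hB : ∀ x y : B, x * y = y * x) :
    commutator (Wreath A B) ≤ (rightHom : Wreath A B →* B).ker := by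
  rw [commutator, Subgroup.commutator_le]
  intro g₁ _ g₂ _
  rw [MonoidHom.mem_ker, map_commutatorElement]
  exact commutatorElement_eq_one_iff_commute.2 (hB _ _)

theorem ker_comm (hA : ∀ a b : A, a * b = b * a) (u w : Wreath A B)
    (hu : u.right = 1) (hw : w.right = 1) : u * w = w * u := by
  refine SemidirectProduct.ext ?_ (by simp [hu, hw])
  simp only [mul_left, hu, hw, map_one, MulAut.one_apply]
  exact funext fun x => hA _ _

theorem ker_le_centralizer (hA : ∀ a b : A, a * b = b * a) (hB : ∀ x y : B, x * y = y * x) :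
    (rightHom : Wreath A B →* B).ker ≤
      Subgroup.centralizer (commutator (Wreath A B) : Set (Wreath A B)) := by
  intro w hw
  rw [Subgroup.mem_centralizer_iff]
  intro u hu
  exact ker_comm hA u w (commutator_le_ker hB hu) hw

/-- Constant functions lie in the commutator subgroup, provided `c ^ |B| = 1`. -/
theorem const_mem_commutator {A : Type} [CommGroup A] [Fintype B] (c : A)
    (hc : c ^ Fintype.card B = 1) :
    (inl (fun _ => c) : Wreath A B) ∈ commutator (Wreath A B) := by
  classical
  have key : ∀ x : B, ⁅(inl (fun y => if y = x then c else 1) : Wreath A B),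
      (inr x : Wreath A B)⁆
      = inl (fun y => (if y = x then c else 1) * (if y = 1 then c⁻¹ else 1)) := by
    intro x
    rw [commutator_inl_inr]
    congr 1
    funext y
    have : (wreathConj A B x fun y => if y = x then c else 1) y
        = if y = 1 then c else 1 := by
      show (if y * x = x then c else 1) = _
      simp [mul_eq_right]
    rw [Pi.mul_apply, Pi.inv_apply, this]
    split_ifs <;> simp
  have hmem : ∀ x : B, (inl (fun y => (if y = x then c else 1) * (if y = 1 then c⁻¹ else 1)) :
      Wreath A B) ∈ commutator (Wreath A B) := by
    intro x
    rw [← key x, commutator]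
    exact Subgroup.commutator_mem_commutator (Subgroup.mem_top _) (Subgroup.mem_top _)
  have hfun : (fun _ => c) = ∏ x : B,
      (fun y => (if y = x then c else 1) * (if y = 1 then c⁻¹ else 1) : B → A) := by
    funext y
    rw [Finset.prod_apply]
    rw [Finset.prod_mul_distrib, Finset.prod_ite_eq, Finset.prod_const]
    by_cases hy : y = 1 <;> simp [hy, inv_pow, hc]
  have hp : (∏ x : B,
      (fun y => (if y = x then c else 1) * (if y = 1 then c⁻¹ else 1) : B → A))
      ∈ (commutator (Wreath A B)).comap (inl : (B → A) →* Wreath A B) :=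
    Subgroup.prod_mem _ fun x _ => Subgroup.mem_comap.2 (hmem x)
  have := Subgroup.mem_comap.1 hp
  rw [hfun]
  exact this

/-- Functions invariant under right-translation by `S` biject with functions on `B ⧸ S`. -/
noncomputable def fixEquiv (S : Subgroup B) :
    ((B ⧸ S) → A) ≃ {ξ : B → A // ∀ t ∈ S, wreathConj A B t ξ = ξ} where
  toFun f := ⟨fun x => f (QuotientGroup.mk x), by
    intro t ht
    funext x
    show f (QuotientGroup.mk (x * t)) = f (QuotientGroup.mk x)
    congr 1
    rw [QuotientGroup.eq]
    simpa [mul_assoc] using S.inv_mem ht⟩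
  invFun ξ := fun z => ξ.1 z.out
  left_inv f := by
    funext z
    simp only []
    congr 1
    exact QuotientGroup.out_eq' z
  right_inv ξ := by
    refine Subtype.ext (funext fun x => ?_)
    have h : x⁻¹ * (QuotientGroup.mk x : B ⧸ S).out ∈ S := by
      rw [← QuotientGroup.eq]
      exact (QuotientGroup.out_eq' _).symm
    have := congrFun (ξ.2 _ h) x
    show ξ.1 _ = ξ.1 x
    rw [← this]
    exact congrArg ξ.1 (mul_inv_cancel_left x _).symm

theorem card_fix [Finite B] (S : Subgroup B) :
    Nat.card {ξ : B → A // ∀ t ∈ S, wreathConj A B t ξ = ξ}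
      = Nat.card A ^ Nat.card (B ⧸ S) := by
  rw [← Nat.card_congr (fixEquiv S)]
  exact Nat.card_fun

/-- If `B` is trivial then `Wreath A B ≃* A`. -/
def wreathTrivEquiv [Subsingleton B] : Wreath A B ≃* A where
  toFun w := w.left 1
  invFun a := inl (fun _ => a)
  left_inv w := by
    refine SemidirectProduct.ext ?_ ?_
    · funext x
      exact congrArg w.left (Subsingleton.elim _ _)
    · exact Subsingleton.elim _ _
  right_inv a := rfl
  map_mul' u w := by
    show (u.left * wreathConj A B u.right w.left) 1 = u.left 1 * w.left 1
    rw [Pi.mul_apply]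
    congr 1
    exact congrArg w.left (Subsingleton.elim _ _)

end WreathGeneral



/-! ### The specific group -/


abbrev Aq (q : ℕ) : Type := Multiplicative (ZMod q)
abbrev Tqr (q r : ℕ) : Type := Multiplicative (ZMod q) × Multiplicative (ZMod (r * q))
abbrev WW (q r : ℕ) : Type := Wreath (Aq q) (Tqr q r)

theorem cardT (q r : ℕ) : Nat.card (Tqr q r) = q * (r * q) := by
  rw [Nat.card_prod, Nat.card_congr Multiplicative.toAdd, Nat.card_congr Multiplicative.toAdd,
    Nat.card_zmod, Nat.card_zmod]

theorem g_ne (q : ℕ) (hq : 2 ≤ q) : Multiplicative.ofAdd (1 : ZMod q) ≠ 1 := by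
  haveI : NeZero q := ⟨by omega⟩
  haveI : Fact (1 < q) := ⟨hq⟩
  intro h
  have : (1 : ZMod q) = 0 := by simpa using congrArg Multiplicative.toAdd h
  exact one_ne_zero this

theorem pow_q (q : ℕ) (c : Aq q) : c ^ q = 1 := by
  have h : (c ^ q).toAdd = 0 := by
    rw [toAdd_pow, nsmul_eq_mul, ZMod.natCast_self, zero_mul]
  rwa [toAdd_eq_zero] at h

theorem pow_rq (q r : ℕ) (x : Tqr q r) : x ^ (r * q) = 1 := by
  have key : ∀ c : Aq q, c ^ (r * q) = 1 := by
    intro c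
    rw [mul_comm r q, pow_mul, pow_q]
    exact one_pow _
  have h1 : (x.1) ^ (r * q) = 1 := key x.1
  have h2 : (x.2) ^ (r * q) = 1 := by
    have h : ((x.2) ^ (r * q)).toAdd = 0 := by
      rw [toAdd_pow, nsmul_eq_mul, ZMod.natCast_self, zero_mul]
    rwa [toAdd_eq_zero] at h
  have hx : x ^ (r * q) = (x.1 ^ (r * q), x.2 ^ (r * q)) := rfl
  rw [hx, h1, h2]
  rfl

theorem card3 (q r : ℕ) (hq : 2 ≤ q) (hr : 1 ≤ r) : 3 ≤ Nat.card (Tqr q r) := by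
  rw [cardT]
  have h := Nat.mul_le_mul hq (Nat.mul_le_mul hr hq)
  omega

example (q r : ℕ) [NeZero q] [NeZero (r * q)] : Finite (Tqr q r) := inferInstance
example (q r : ℕ) [NeZero q] [NeZero (r * q)] : Fintype (Tqr q r) := inferInstance

theorem cen_eq_ker (q r : ℕ) (hq : 2 ≤ q) (hr : 1 ≤ r) :
    Subgroup.centralizer (commutator (WW q r) : Set (WW q r))
      = (rightHom : WW q r →* Tqr q r).ker := by
  haveI : NeZero q := ⟨by omega⟩
  haveI : NeZero (r * q) := ⟨Nat.mul_ne_zero (by omega) (by omega)⟩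
  refine le_antisymm ?_ (ker_le_centralizer (fun a b => mul_comm a b) (fun x y => mul_comm x y))
  intro w hw
  rw [MonoidHom.mem_ker]
  by_contra ht
  have ht' : w.right ≠ 1 := ht
  obtain ⟨s, hs1, hs2⟩ := exists_ne_ne (card3 q r hq hr) (1 : Tqr q r) w.right⁻¹
  set g := Multiplicative.ofAdd (1 : ZMod q) with hg
  set γ : Tqr q r → Aq q := fun x => if x = 1 then g else 1 with hγ
  have hc : ⁅(inl γ : WW q r), (inr s : WW q r)⁆ ∈ commutator (WW q r) := by
    rw [commutator]
    exact Subgroup.commutator_mem_commutator (Subgroup.mem_top _) (Subgroup.mem_top _)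
  have hcomm := Subgroup.mem_centralizer_iff.1 hw _ hc
  rw [commutator_inl_inr] at hcomm
  have h4 := (commute_inl_iff w _).1 hcomm.symm
  set α := γ * (wreathConj (Aq q) (Tqr q r) s γ)⁻¹ with hα
  have h5 := congrFun h4 1
  rw [Pi.mul_apply, Pi.mul_apply, wc_apply] at h5
  have h6 : α (1 * w.right) = α 1 := by
    refine mul_left_cancel (a := w.left 1) ?_
    rw [h5, mul_comm]
  have hα1 : α 1 = g := by
    rw [hα, Pi.mul_apply, Pi.inv_apply, wc_apply, one_mul, hγ]
    simp [hs1]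
  have hαt : α (1 * w.right) = 1 := by
    have hts : w.right * s ≠ 1 := by
      intro h
      exact hs2 (eq_inv_of_mul_eq_one_right h)
    rw [one_mul, hα, Pi.mul_apply, Pi.inv_apply, wc_apply, hγ]
    simp [ht', hts]
  rw [hαt, hα1] at h6
  exact g_ne q hq h6.symm

theorem const_mem (q r : ℕ) (hq : 2 ≤ q) (hr : 1 ≤ r) (c : Aq q) :
    (inl (fun _ => c) : WW q r) ∈ commutator (WW q r) := by
  haveI : NeZero q := ⟨by omega⟩
  haveI : NeZero (r * q) := ⟨Nat.mul_ne_zero (by omega) (by omega)⟩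
  refine const_mem_commutator c ?_
  rw [← Nat.card_eq_fintype_card, cardT, mul_comm q (r * q), pow_mul, pow_q]


theorem main (q r : ℕ) (hq : 2 ≤ q) (hr : 1 ≤ r) {G : Type} [Group G]
    (h : RClass CyclicFamily G) : ∀ _e : G ≃* WW q r, False := by
  haveI : NeZero q := ⟨by omega⟩
  haveI : NeZero (r * q) := ⟨Nat.mul_ne_zero (by omega) (by omega)⟩
  induction h with
  | base G hG =>
    intro e
    obtain ⟨hfin, hcyc⟩ := hG
    haveI := hcyc
    obtain ⟨gen, hgen⟩ := IsCyclic.exists_generator (α := G)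
    have hGcomm : ∀ a b : G, a * b = b * a := by
      intro a b
      obtain ⟨m, hm⟩ := Subgroup.mem_zpowers_iff.1 (hgen a)
      obtain ⟨n, hn⟩ := Subgroup.mem_zpowers_iff.1 (hgen b)
      rw [← hm, ← hn, ← zpow_add, ← zpow_add, add_comm]
    set s : Tqr q r := (Multiplicative.ofAdd (1 : ZMod q), 1) with hs
    have hs1 : s ≠ 1 := by
      intro hcon
      exact g_ne q hq (congrArg Prod.fst hcon)
    set γ : Tqr q r → Aq q := fun x => if x = 1 then Multiplicative.ofAdd (1 : ZMod q) else 1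
      with hγ
    have hWcomm : (inr s : WW q r) * inl γ = inl γ * inr s := by
      have h1 : e.symm (inr s) * e.symm (inl γ) = e.symm (inl γ) * e.symm (inr s) :=
        hGcomm _ _
      have h2 := congrArg e h1
      simpa [map_mul] using h2
    have h3 := (commute_inl_iff (inr s) γ).1 hWcomm
    simp only [left_inr, right_inr, one_mul, mul_one] at h3
    have h4 := congrFun h3 1
    rw [wc_apply, one_mul] at h4
    rw [hγ] at h4
    simp only [hs1, if_neg, if_pos] at h4
    exact g_ne q hq h4.symm
  | iso G H hG e ih =>
    intro e'
    exact ih (e.trans e')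
  | prod X Y hX hY ihX ihY =>
    intro e
    classical
    by_cases hX0 : ∀ x : X, (e (x, 1)).right = 1
    · -- the left factor is central hence trivial
      have hXab : ∀ x x' : X, x * x' = x' * x := by
        intro x x'
        have h1 : e (x, 1) * e (x', 1) = e (x', 1) * e (x, 1) :=
          ker_comm (fun a b => mul_comm a b) _ _ (hX0 x) (hX0 x')
        have h2 : ((x, 1) : X × Y) * (x', 1) = (x', 1) * (x, 1) :=
          e.injective (by rw [map_mul, map_mul]; exact h1)
        exact congrArg Prod.fst h2
      have hXone : ∀ x : X, x = 1 := by
        intro x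
        have hcentral : ∀ w : WW q r, e (x, 1) * w = w * e (x, 1) := by
          intro w
          obtain ⟨⟨x', y'⟩, hw⟩ := e.surjective w
          have hcp : ((x, 1) : X × Y) * (x', y') = (x', y') * (x, 1) := by
            have hxx : x * x' = x' * x := hXab x x'
            simp [Prod.ext_iff, hxx]
          rw [← hw, ← map_mul, ← map_mul, hcp]
        have hxr : (e (x, 1)).right = 1 := hX0 x
        have hinl : e (x, 1) = inl (e (x, 1)).left := eq_inl_of_right_eq_one _ hxr
        set ξ := (e (x, 1)).left with hξdef
        have hconst : ∀ s : Tqr q r, ξ s = ξ 1 := by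
          intro s
          have h2 := hcentral (inr s)
          rw [hinl] at h2
          have h3 := (commute_inl_iff (inr s) ξ).1 h2.symm
          simp only [left_inr, right_inr, one_mul, mul_one] at h3
          have h4 := congrFun h3 1
          rw [wc_apply, one_mul] at h4
          exact h4
        have hfn : ξ = fun _ => ξ 1 := funext fun s => hconst s
        have hmem : e (x, 1) ∈ commutator (WW q r) := by
          rw [hinl, hfn]
          exact const_mem q r hq hr _
        have hmem2 : ((x, 1) : X × Y) ∈ commutator (X × Y) := by
          have h5 := mem_commutator_map e.symm hmem
          simpa using h5
        have hx : x ∈ commutator X := ((mem_commutator_prod_iff _).1 hmem2).1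
        have hbot : commutator X ≤ ⊥ := by
          rw [commutator, Subgroup.commutator_le]
          intro a _ b _
          rw [Subgroup.mem_bot]
          exact commutatorElement_eq_one_iff_commute.2 (hXab a b)
        simpa using hbot hx
      haveI : Unique X := ⟨⟨1⟩, hXone⟩
      exact ihY ((MulEquiv.uniqueProd (N := X) (M := Y)).symm.trans e)
    by_cases hY0 : ∀ y : Y, (e (1, y)).right = 1
    · -- symmetric: the right factor is central hence trivial
      have hYab : ∀ y y' : Y, y * y' = y' * y := by
        intro y y'
        have h1 : e (1, y) * e (1, y') = e (1, y') * e (1, y) :=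
          ker_comm (fun a b => mul_comm a b) _ _ (hY0 y) (hY0 y')
        have h2 : ((1, y) : X × Y) * (1, y') = (1, y') * (1, y) :=
          e.injective (by rw [map_mul, map_mul]; exact h1)
        exact congrArg Prod.snd h2
      have hYone : ∀ y : Y, y = 1 := by
        intro y
        have hcentral : ∀ w : WW q r, e (1, y) * w = w * e (1, y) := by
          intro w
          obtain ⟨⟨x', y'⟩, hw⟩ := e.surjective w
          have hcp : ((1, y) : X × Y) * (x', y') = (x', y') * (1, y) := by
            have hyy : y * y' = y' * y := hYab y y'
            simp [Prod.ext_iff, hyy]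
          rw [← hw, ← map_mul, ← map_mul, hcp]
        have hxr : (e (1, y)).right = 1 := hY0 y
        have hinl : e (1, y) = inl (e (1, y)).left := eq_inl_of_right_eq_one _ hxr
        set ξ := (e (1, y)).left with hξdef
        have hconst : ∀ s : Tqr q r, ξ s = ξ 1 := by
          intro s
          have h2 := hcentral (inr s)
          rw [hinl] at h2
          have h3 := (commute_inl_iff (inr s) ξ).1 h2.symm
          simp only [left_inr, right_inr, one_mul, mul_one] at h3
          have h4 := congrFun h3 1
          rw [wc_apply, one_mul] at h4
          exact h4
        have hfn : ξ = fun _ => ξ 1 := funext fun s => hconst s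
        have hmem : e (1, y) ∈ commutator (WW q r) := by
          rw [hinl, hfn]
          exact const_mem q r hq hr _
        have hmem2 : ((1, y) : X × Y) ∈ commutator (X × Y) := by
          have h5 := mem_commutator_map e.symm hmem
          simpa using h5
        have hy : y ∈ commutator Y := ((mem_commutator_prod_iff _).1 hmem2).2
        have hbot : commutator Y ≤ ⊥ := by
          rw [commutator, Subgroup.commutator_le]
          intro a _ b _
          rw [Subgroup.mem_bot]
          exact commutatorElement_eq_one_iff_commute.2 (hYab a b)
        simpa using hbot hy
      haveI : Unique Y := ⟨⟨1⟩, hYone⟩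
      exact ihX ((MulEquiv.prodUnique (M := X) (N := Y)).symm.trans e)
    -- main case: both projections nontrivial
    push_neg at hX0 hY0
    obtain ⟨x₀, hx₀⟩ := hX0
    obtain ⟨y₀, hy₀⟩ := hY0
    have hcen := cen_eq_ker q r hq hr
    set SX : Subgroup (Tqr q r) := ((rightHom : WW q r →* Tqr q r).comp
      (e.toMonoidHom.comp (MonoidHom.inl X Y))).range with hSXdef
    set SY : Subgroup (Tqr q r) := ((rightHom : WW q r →* Tqr q r).comp
      (e.toMonoidHom.comp (MonoidHom.inr X Y))).range with hSYdef
    set mX : Set (Tqr q r → Aq q) := {ξ | ∃ x : X, e (x, 1) = inl ξ} with hmXdef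
    set mY : Set (Tqr q r → Aq q) := {ξ | ∃ y : Y, e (1, y) = inl ξ} with hmYdef
    set FX : Set (Tqr q r → Aq q) :=
      {ξ | ∀ t ∈ SX, wreathConj (Aq q) (Tqr q r) t ξ = ξ} with hFXdef
    set FY : Set (Tqr q r → Aq q) :=
      {ξ | ∀ t ∈ SY, wreathConj (Aq q) (Tqr q r) t ξ = ξ} with hFYdef
    have hdecomp : ∀ α : Tqr q r → Aq q, ∃ ξ ∈ mX, ∃ υ ∈ mY, ξ * υ = α := by
      intro α
      obtain ⟨⟨x, y⟩, hp⟩ := e.surjective (inl α)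
      have h1 : (inl α : WW q r) ∈ Subgroup.centralizer (commutator (WW q r) :
          Set (WW q r)) := by
        rw [hcen]
        exact MonoidHom.mem_ker.2 (rightHom_inl α)
      have h2 : ((x, y) : X × Y) ∈ Subgroup.centralizer (commutator (X × Y) :
          Set (X × Y)) := by
        rw [← mem_centralizer_commutator_map e, hp]
        exact h1
      have hxc : ∀ u ∈ commutator X, u * x = x * u := by
        intro u hu
        have husq : ((u, 1) : X × Y) ∈ commutator (X × Y) :=
          (mem_commutator_prod_iff _).2 ⟨hu, Subgroup.one_mem _⟩
        have h3 := Subgroup.mem_centralizer_iff.1 h2 _ husq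
        exact congrArg Prod.fst h3
      have hyc : ∀ v ∈ commutator Y, v * y = y * v := by
        intro v hv
        have hvsq : ((1, v) : X × Y) ∈ commutator (X × Y) :=
          (mem_commutator_prod_iff _).2 ⟨Subgroup.one_mem _, hv⟩
        have h3 := Subgroup.mem_centralizer_iff.1 h2 _ hvsq
        exact congrArg Prod.snd h3
      have h4 : e (x, 1) ∈ Subgroup.centralizer (commutator (WW q r) : Set (WW q r)) := by
        rw [mem_centralizer_commutator_map e, Subgroup.mem_centralizer_iff]
        rintro ⟨u, v⟩ huv
        obtain ⟨hu, hv⟩ := (mem_commutator_prod_iff _).1 huv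
        have hux : u * x = x * u := hxc u hu
        simp [Prod.ext_iff, hux]
      have h5 : e (1, y) ∈ Subgroup.centralizer (commutator (WW q r) : Set (WW q r)) := by
        rw [mem_centralizer_commutator_map e, Subgroup.mem_centralizer_iff]
        rintro ⟨u, v⟩ huv
        obtain ⟨hu, hv⟩ := (mem_commutator_prod_iff _).1 huv
        have hvy : v * y = y * v := hyc v hv
        simp [Prod.ext_iff, hvy]
      rw [hcen] at h4 h5
      have h4' : e (x, 1) = inl (e (x, 1)).left := eq_inl_of_right_eq_one _ h4
      have h5' : e (1, y) = inl (e (1, y)).left := eq_inl_of_right_eq_one _ h5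
      refine ⟨(e (x, 1)).left, ⟨x, h4'⟩, (e (1, y)).left, ⟨y, h5'⟩, ?_⟩
      apply inl_injective (φ := wreathConj (Aq q) (Tqr q r))
      rw [map_mul, ← h4', ← h5', ← map_mul]
      rw [show ((x, 1) : X × Y) * (1, y) = (x, y) by simp [Prod.ext_iff]]
      exact hp
    have hmXF : mX ⊆ FY := by
      rintro ξ ⟨x, hx⟩ t ⟨y, rfl⟩
      have hcomm : e (x, 1) * e (1, y) = e (1, y) * e (x, 1) := by
        rw [← map_mul, ← map_mul]
        congr 1
        simp [Prod.ext_iff]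
      rw [hx] at hcomm
      have h3 := (commute_inl_iff (e (1, y)) ξ).1 hcomm.symm
      have h4 : wreathConj (Aq q) (Tqr q r) ((e (1, y)).right) ξ = ξ := by
        rw [mul_comm ξ _] at h3
        exact mul_left_cancel h3
      exact h4
    have hmYF : mY ⊆ FX := by
      rintro ξ ⟨y, hy⟩ t ⟨x, rfl⟩
      have hcomm : e (1, y) * e (x, 1) = e (x, 1) * e (1, y) := by
        rw [← map_mul, ← map_mul]
        congr 1
        simp [Prod.ext_iff]
      rw [hy] at hcomm
      have h3 := (commute_inl_iff (e (x, 1)) ξ).1 hcomm.symm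
      have h4 : wreathConj (Aq q) (Tqr q r) ((e (x, 1)).right) ξ = ξ := by
        rw [mul_comm ξ _] at h3
        exact mul_left_cancel h3
      exact h4
    -- counting
    haveI : Fact (1 < q) := ⟨hq⟩
    set a := Nat.card (Aq q) with hadef
    have ha2 : 2 ≤ a := by
      have hnt : Nontrivial (Aq q) := ⟨⟨1, Multiplicative.ofAdd (1 : ZMod q), (g_ne q hq).symm⟩⟩
      exact Finite.one_lt_card_iff_nontrivial.2 hnt
    set N := Nat.card (Tqr q r) with hNdef
    set nX := Nat.card ((Tqr q r) ⧸ SX) with hnXdef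
    set nY := Nat.card ((Tqr q r) ⧸ SY) with hnYdef
    have hLX : N = nX * Nat.card SX := Subgroup.card_eq_card_quotient_mul_card_subgroup SX
    have hLY : N = nY * Nat.card SY := Subgroup.card_eq_card_quotient_mul_card_subgroup SY
    have hSX2 : 2 ≤ Nat.card SX := by
      refine Finite.one_lt_card_iff_nontrivial.2 ?_
      rw [Subgroup.nontrivial_iff_ne_bot]
      intro hbot
      apply hx₀
      have hmm : (e (x₀, 1)).right ∈ SX := ⟨x₀, rfl⟩
      rw [hbot] at hmm
      exact Subgroup.mem_bot.1 hmm
    have hSY2 : 2 ≤ Nat.card SY := by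
      refine Finite.one_lt_card_iff_nontrivial.2 ?_
      rw [Subgroup.nontrivial_iff_ne_bot]
      intro hbot
      apply hy₀
      have hmm : (e (1, y₀)).right ∈ SY := ⟨y₀, rfl⟩
      rw [hbot] at hmm
      exact Subgroup.mem_bot.1 hmm
    have hFYcard : Nat.card FY = a ^ nY := card_fix SY
    have hFXcard : Nat.card FX = a ^ nX := card_fix SX
    have hsurj : Function.Surjective
        (fun p : mX × mY => (p.1.1 * p.2.1 : Tqr q r → Aq q)) := by
      intro α
      obtain ⟨ξ, hξ, υ, hυ, hh⟩ := hdecomp α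
      exact ⟨(⟨ξ, hξ⟩, ⟨υ, hυ⟩), hh⟩
    have h1 : a ^ N ≤ Nat.card mX * Nat.card mY := by
      have hle := Nat.card_le_card_of_surjective _ hsurj
      rw [Nat.card_prod, Nat.card_fun] at hle
      exact hle
    have hmx : Nat.card mX ≤ a ^ nY := by
      rw [← hFYcard, Nat.card_coe_set_eq, Nat.card_coe_set_eq]
      exact Set.ncard_le_ncard hmXF (Set.toFinite _)
    have hmy : Nat.card mY ≤ a ^ nX := by
      rw [← hFXcard, Nat.card_coe_set_eq, Nat.card_coe_set_eq]
      exact Set.ncard_le_ncard hmYF (Set.toFinite _)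
    have hNle : N ≤ nY + nX := by
      have h2 : a ^ N ≤ a ^ (nY + nX) := by
        rw [pow_add]
        exact le_trans h1 (Nat.mul_le_mul hmx hmy)
      exact (Nat.pow_le_pow_iff_right (by omega)).1 h2
    have h2nX : 2 * nX ≤ N := by
      rw [hLX, mul_comm 2 nX]
      exact Nat.mul_le_mul (le_refl nX) hSX2
    have h2nY : 2 * nY ≤ N := by
      rw [hLY, mul_comm 2 nY]
      exact Nat.mul_le_mul (le_refl nY) hSY2
    have hposX : 0 < Nat.card mX := by
      have hm : (1 : Tqr q r → Aq q) ∈ mX := ⟨1, by simp⟩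
      haveI : Nonempty mX := ⟨⟨1, hm⟩⟩
      exact Nat.card_pos
    have hposY : 0 < Nat.card mY := by
      have hm : (1 : Tqr q r → Aq q) ∈ mY := ⟨1, by simp⟩
      haveI : Nonempty mY := ⟨⟨1, hm⟩⟩
      exact Nat.card_pos
    have hmxlow : a ^ nY ≤ Nat.card mX := by
      have hstep : a ^ nY * Nat.card mY ≤ Nat.card mX * Nat.card mY := by
        calc a ^ nY * Nat.card mY ≤ a ^ nY * a ^ nX := Nat.mul_le_mul (le_refl _) hmy
          _ = a ^ N := by rw [← pow_add]; congr 1; omega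
          _ ≤ Nat.card mX * Nat.card mY := h1
      exact Nat.le_of_mul_le_mul_right hstep hposY
    have hmylow : a ^ nX ≤ Nat.card mY := by
      have hstep : a ^ nX * Nat.card mX ≤ Nat.card mY * Nat.card mX := by
        calc a ^ nX * Nat.card mX ≤ a ^ nX * a ^ nY := Nat.mul_le_mul (le_refl _) hmx
          _ = a ^ N := by rw [← pow_add]; congr 1; omega
          _ ≤ Nat.card mX * Nat.card mY := h1
          _ = Nat.card mY * Nat.card mX := mul_comm _ _
      exact Nat.le_of_mul_le_mul_right hstep hposX
    have heqX : mX = FY := by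
      refine Set.eq_of_subset_of_ncard_le hmXF ?_ (Set.toFinite _)
      rw [← Nat.card_coe_set_eq, ← Nat.card_coe_set_eq, hFYcard]
      exact hmxlow
    have heqY : mY = FX := by
      refine Set.eq_of_subset_of_ncard_le hmYF ?_ (Set.toFinite _)
      rw [← Nat.card_coe_set_eq, ← Nat.card_coe_set_eq, hFXcard]
      exact hmylow
    have hgX : (fun _ => Multiplicative.ofAdd (1 : ZMod q) : Tqr q r → Aq q) ∈ mX := by
      rw [heqX]
      intro t _
      rfl
    have hgY : (fun _ => Multiplicative.ofAdd (1 : ZMod q) : Tqr q r → Aq q) ∈ mY := by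
      rw [heqY]
      intro t _
      rfl
    obtain ⟨x1, hx1⟩ := hgX
    obtain ⟨y1, hy1⟩ := hgY
    have hpair : ((x1, 1) : X × Y) = (1, y1) := e.injective (hx1.trans hy1.symm)
    have hx1one : x1 = 1 := congrArg Prod.fst hpair
    rw [hx1one] at hx1
    have hone : (inl (fun _ => Multiplicative.ofAdd (1 : ZMod q) : Tqr q r → Aq q) :
        WW q r) = 1 := by
      rw [← hx1]
      exact map_one e
    have hg1 : (fun _ => Multiplicative.ofAdd (1 : ZMod q) : Tqr q r → Aq q) = 1 := by
      apply inl_injective (φ := wreathConj (Aq q) (Tqr q r))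
      rw [hone, map_one]
    exact g_ne q hq (congrFun hg1 1)
  | wreath A' G hA' hG ihA' =>
    intro e
    obtain ⟨hfinG, hcycG⟩ := hG
    haveI := hfinG
    haveI := hcycG
    rcases subsingleton_or_nontrivial G with hsub | hnt
    · exact ihA' ((wreathTrivEquiv (A := A') (B := G)).symm.trans e)
    obtain ⟨g₀, hg₀⟩ := exists_ne (1 : G)
    obtain ⟨gen, hgen⟩ := IsCyclic.exists_generator (α := G)
    have hGcomm : ∀ x y : G, x * y = y * x := by
      intro x y
      obtain ⟨m, hm⟩ := Subgroup.mem_zpowers_iff.1 (hgen x)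
      obtain ⟨n, hn⟩ := Subgroup.mem_zpowers_iff.1 (hgen y)
      rw [← hm, ← hn, ← zpow_add, ← zpow_add, add_comm]
    -- A' is commutative
    have hA'comm : ∀ a b : A', a * b = b * a := by
      intro a b
      classical
      set γa : G → A' := fun x => if x = 1 then a else 1 with hγa
      set γb : G → A' := fun x => if x = 1 then b else 1 with hγb
      set u := ⁅(inl γa : Wreath A' G), (inr g₀ : Wreath A' G)⁆ with hu
      set v := ⁅(inl γb : Wreath A' G), (inr g₀ : Wreath A' G)⁆ with hv
      have humem : u ∈ commutator (Wreath A' G) := by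
        rw [hu, commutator]
        exact Subgroup.commutator_mem_commutator (Subgroup.mem_top _) (Subgroup.mem_top _)
      have hvmem : v ∈ commutator (Wreath A' G) := by
        rw [hv, commutator]
        exact Subgroup.commutator_mem_commutator (Subgroup.mem_top _) (Subgroup.mem_top _)
      have hWr : ∀ w ∈ commutator (Wreath A' G), (e w).right = 1 := by
        intro w hw
        exact commutator_le_ker (fun x y => mul_comm x y) (mem_commutator_map e hw)
      have hcomm1 : e u * e v = e v * e u :=
        ker_comm (fun x y => mul_comm x y) _ _ (hWr u humem) (hWr v hvmem)
      have huv : u * v = v * u := e.injective (by rw [map_mul, map_mul]; exact hcomm1)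
      -- extract pointwise information at 1
      rw [hu, hv, commutator_inl_inr, commutator_inl_inr] at huv
      rw [← map_mul, ← map_mul] at huv
      have hfeq := inl_injective (φ := wreathConj A' G) huv
      have hpt := congrFun hfeq 1
      simp only [Pi.mul_apply, Pi.inv_apply, wc_apply, one_mul] at hpt
      rw [hγa, hγb] at hpt
      simp only [if_pos rfl, if_neg hg₀] at hpt
      -- hpt should now read a * 1⁻¹ * (b * 1⁻¹) = b * 1⁻¹ * (a * 1⁻¹)
      simpa using hpt
    -- the quotient by the centralizer of the commutator subgroup is cyclic; transport
    have hker : ∀ w : Wreath A' G, ∃ n : ℤ,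
        w * ((inr gen : Wreath A' G) ^ n)⁻¹ ∈ (rightHom : Wreath A' G →* G).ker := by
      intro w
      obtain ⟨n, hn⟩ := Subgroup.mem_zpowers_iff.1 (hgen (rightHom w))
      refine ⟨n, ?_⟩
      rw [MonoidHom.mem_ker, map_mul, map_inv, map_zpow, rightHom_inr, hn]
      exact mul_inv_cancel _
    have hcycT : ∀ t : Tqr q r, ∃ n : ℤ, t = (rightHom (e (inr gen))) ^ n := by
      intro t
      obtain ⟨n, hn⟩ := hker (e.symm (inr t))
      have h5 : e.symm (inr t) * ((inr gen : Wreath A' G) ^ n)⁻¹ ∈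
          Subgroup.centralizer (commutator (Wreath A' G) : Set (Wreath A' G)) :=
        ker_le_centralizer hA'comm hGcomm hn
      have h6 : e (e.symm (inr t) * ((inr gen : Wreath A' G) ^ n)⁻¹) ∈
          Subgroup.centralizer (commutator (WW q r) : Set (WW q r)) :=
        (mem_centralizer_commutator_map e).2 h5
      rw [cen_eq_ker q r hq hr] at h6
      rw [map_mul, map_inv, map_zpow] at h6
      rw [MulEquiv.apply_symm_apply] at h6
      have h7 := MonoidHom.mem_ker.1 h6
      rw [map_mul, map_inv, map_zpow, rightHom_inr] at h7
      refine ⟨n, ?_⟩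
      have := mul_inv_eq_one.1 h7
      exact this
    haveI hTcyc : IsCyclic (Tqr q r) :=
      ⟨⟨rightHom (e (inr gen)), fun t => Subgroup.mem_zpowers_iff.2
        (by obtain ⟨n, hn⟩ := hcycT t; exact ⟨n, hn.symm⟩)⟩⟩
    have hexp : Monoid.exponent (Tqr q r) = Nat.card (Tqr q r) :=
      IsCyclic.exponent_eq_card
    have hdvd : Monoid.exponent (Tqr q r) ∣ (r * q) :=
      Monoid.exponent_dvd_of_forall_pow_eq_one (pow_rq q r)
    rw [hexp, cardT] at hdvd
    have hle := Nat.le_of_dvd (by positivity) hdvd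
    have h2 : 2 * (r * q) ≤ q * (r * q) := Nat.mul_le_mul hq (le_refl _)
    have h3 : 1 * 1 ≤ r * q := Nat.mul_le_mul hr (by omega)
    omega

end WreathNotInRClass

/-- For every `q ≥ 2` and `r ≥ 1`, the group `W = ℤ_q ≀ (ℤ_q × ℤ_{rq})` does not belong to
the class `R({ℤ_n}_{n ≥ 1})` generated by the finite cyclic groups. -/
theorem wreath_not_in_rclass_cyclic (q r : ℕ) (hq : 2 ≤ q) (hr : 1 ≤ r) :
    ¬ RClass CyclicFamily
      (Wreath (Multiplicative (ZMod q))
        (Multiplicative (ZMod q) × Multiplicative (ZMod (r * q)))) := by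
  intro h
  exact WreathNotInRClass.main q r hq hr h (MulEquiv.refl _)
end

section
/- In the partition-preserving action setup, there exists an injective group homomorphism σ: A → C such that π ∘ σ = λ. -/
/-- The group `S_b` of permutations of `t b` induced by elements `g` of `A` with
`g (t b) = t b`. -/
def resStab {X B A : Type} [Group A] [MulAction A X] (t : B → Set X)
    (lam : A →* Equiv.Perm B) (b : B) : Subgroup (Equiv.Perm ↥(t b)) where
  carrier := {σ | ∃ g : A, lam g b = b ∧ ∀ x : ↥(t b), (σ x : X) = g • (x : X)}
  one_mem' := ⟨1, by simp, fun x => by simp⟩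
  mul_mem' := by
    rintro σ τ ⟨g, hgb, hg⟩ ⟨k, hkb, hk⟩
    refine ⟨g * k, by rw [map_mul, Equiv.Perm.mul_apply, hkb, hgb], fun x => ?_⟩
    have h1 : ((σ * τ) x : X) = (σ (τ x) : X) := rfl
    rw [h1, hg (τ x), hk x, mul_smul]
  inv_mem' := by
    rintro σ ⟨g, hgb, hg⟩
    refine ⟨g⁻¹, ?_, fun x => ?_⟩
    · rw [map_inv]
      calc (lam g)⁻¹ b = (lam g)⁻¹ (lam g b) := by rw [hgb]
      _ = b := Equiv.symm_apply_apply (lam g) b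
    · have h1 : (x : X) = g • ((σ⁻¹ x : ↥(t b)) : X) := by
        have h2 := hg (σ⁻¹ x)
        rwa [← Equiv.Perm.mul_apply, mul_inv_cancel, Equiv.Perm.one_apply] at h2
      rw [h1, inv_smul_smul]

lemma smul_mem_orbitSet {G α : Type} [Group G] [MulAction G α] (g : G)
    (μ : MulAction.orbitRel.Quotient G α) {x : α} (hx : x ∈ μ.orbit) : g • x ∈ μ.orbit := by
  rw [MulAction.orbitRel.Quotient.mem_orbit] at hx ⊢
  rw [← hx]
  exact Quotient.sound' (MulAction.mem_orbit x g)

/-- Precomposition action of `G` on a product of function groups `Π i, (Ws i → A i)`,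
where the sets `Ws i ⊆ X` are invariant under the action of `G` on `X`. -/
def precompAction {X G : Type} [Group G] [MulAction G X] {ι : Type}
    (A : ι → Type) [∀ i, Group (A i)] (Ws : ι → Set X)
    (hinv : ∀ (g : G) (i : ι), ∀ x ∈ Ws i, g • x ∈ Ws i) :
    G →* MulAut (Π i, (↥(Ws i) → A i)) where
  toFun g :=
  { toFun := fun α i x => α i ⟨g⁻¹ • (x : X), hinv g⁻¹ i x x.2⟩
    invFun := fun α i x => α i ⟨g • (x : X), hinv g i x x.2⟩
    left_inv := fun α => by
      funext i x
      exact congrArg (α i) (Subtype.ext (by simp))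
    right_inv := fun α => by
      funext i x
      exact congrArg (α i) (Subtype.ext (by simp))
    map_mul' := fun α β => rfl }
  map_one' := by
    ext α i x
    exact congrArg (α i) (Subtype.ext (by simp))
  map_mul' := fun g₁ g₂ => by
    ext α i x
    exact congrArg (α i) (Subtype.ext (by rw [mul_inv_rev]; exact mul_smul _ _ _))

/-- The group `C = (Π_{μ ∈ B/H} Map(B_μ, S_{b_μ})) ⋊ H`, where `H = λ(A)` acts on each
`Map(B_μ, S_{b_μ})` by precomposition with its action on the orbit `B_μ`. -/
abbrev Cgroup {X B A : Type} [Group A] [MulAction A X] (t : B → Set X)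
    (lam : A →* Equiv.Perm B)
    (rep : MulAction.orbitRel.Quotient ↥lam.range B → B) : Type :=
  (Π μ : MulAction.orbitRel.Quotient ↥lam.range B, (↥μ.orbit → ↥(resStab t lam (rep μ))))
    ⋊[precompAction (fun μ => ↥(resStab t lam (rep μ))) (fun μ => μ.orbit)
        (fun g μ x hx => smul_mem_orbitSet g μ hx)] ↥lam.range

namespace ExistsMonoAux

variable {X B A : Type} [Group A] [MulAction A X]

lemma smul_mem_t (t : B → Set X) (lam : A →* Equiv.Perm B)
    (hlam : ∀ (g : A) (b : B), (fun x => g • x) '' t b = t (lam g b)) (g : A) {b : B} {x : X} (hx : x ∈ t b) : g • x ∈ t (lam g b) := by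
  rw [← hlam g b]; exact ⟨x, hx, rfl⟩

def permOf (t : B → Set X) (lam : A →* Equiv.Perm B)
    (hlam : ∀ (g : A) (b : B), (fun x => g • x) '' t b = t (lam g b)) (a : A) (b : B) (h : lam a b = b) : Equiv.Perm ↥(t b) where
  toFun x := ⟨a • (x : X), by have := smul_mem_t t lam hlam a x.2; rwa [h] at this⟩
  invFun x := ⟨a⁻¹ • (x : X), by
    have := smul_mem_t t lam hlam a⁻¹ x.2
    rwa [map_inv, (Equiv.Perm.inv_eq_iff_eq).mpr h.symm] at this⟩
  left_inv x := Subtype.ext (inv_smul_smul a (x : X))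
  right_inv x := Subtype.ext (smul_inv_smul a (x : X))

lemma permOf_mem (t : B → Set X) (lam : A →* Equiv.Perm B)
    (hlam : ∀ (g : A) (b : B), (fun x => g • x) '' t b = t (lam g b)) (a : A) (b : B) (h : lam a b = b) :
    permOf t lam hlam a b h ∈ resStab t lam b := ⟨a, h, fun _ => rfl⟩

end ExistsMonoAux

/-- There exists an injective group homomorphism `σ : A → C` with `π ∘ σ = λ`. -/
theorem exists_mono_into_cgroup {X B A : Type} [Group A] [MulAction A X]
    (hfaith : ∀ g : A, (∀ x : X, g • x = x) → g = 1)
    (t : B → Set X) (hne : ∀ b, (t b).Nonempty) (hpart : ∀ x : X, ∃! b, x ∈ t b)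
    (lam : A →* Equiv.Perm B)
    (hlam : ∀ (g : A) (b : B), (fun x => g • x) '' t b = t (lam g b))
    (rep : MulAction.orbitRel.Quotient ↥lam.range B → B)
    (hrep : ∀ μ, rep μ ∈ μ.orbit) :
    ∃ σ : A →* Cgroup t lam rep, Function.Injective σ ∧
      ∀ g : A, SemidirectProduct.rightHom (σ g) = lam.rangeRestrict g := by
  classical
  have hc0 : ∀ b : B, ∃ a : A,
      lam a (rep (Quotient.mk'' b : MulAction.orbitRel.Quotient ↥lam.range B)) = b := by
    intro b
    have h2 := hrep (Quotient.mk'' b : MulAction.orbitRel.Quotient ↥lam.range B)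
    have h3 : (Quotient.mk'' (rep (Quotient.mk'' b)) :
        MulAction.orbitRel.Quotient ↥lam.range B) = Quotient.mk'' b :=
      MulAction.orbitRel.Quotient.mem_orbit.mp h2
    have h4 : rep (Quotient.mk'' b) ∈ MulAction.orbit (↥lam.range) b :=
      MulAction.orbitRel_apply.mp (Quotient.exact' h3)
    obtain ⟨h, hh⟩ := h4
    obtain ⟨a, ha⟩ := h.2
    refine ⟨a⁻¹, ?_⟩
    have hh' : lam a b = rep (Quotient.mk'' b) := by
      rw [ha]; exact hh
    rw [map_inv, ← hh']; exact Equiv.symm_apply_apply (lam a) b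
  choose c hc using hc0
  have hmem : ∀ (μ : MulAction.orbitRel.Quotient ↥lam.range B) (b : ↥μ.orbit),
      (Quotient.mk'' (b : B) : MulAction.orbitRel.Quotient ↥lam.range B) = μ :=
    fun μ b => MulAction.orbitRel.Quotient.mem_orbit.mp b.2
  have hcb : ∀ (μ : MulAction.orbitRel.Quotient ↥lam.range B) (b : B),
      (Quotient.mk'' b : MulAction.orbitRel.Quotient ↥lam.range B) = μ →
      lam (c b) (rep μ) = b := by
    intro μ b h; subst h; exact hc b
  have horb : ∀ (g : A) (μ : MulAction.orbitRel.Quotient ↥lam.range B) (b : ↥μ.orbit),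
      (Quotient.mk'' (lam g (b : B)) : MulAction.orbitRel.Quotient ↥lam.range B) = μ := by
    intro g μ b
    refine Eq.trans ?_ (hmem μ b)
    exact Quotient.sound' (MulAction.orbitRel_apply.mpr
      (MulAction.mem_orbit (b : B) (lam.rangeRestrict g)))
  have hfix : ∀ (g : A) (μ : MulAction.orbitRel.Quotient ↥lam.range B) (b : ↥μ.orbit),
      lam ((c (b : B))⁻¹ * g * c (lam g⁻¹ (b : B))) (rep μ) = rep μ := by
    intro g μ b
    have h1 : lam (c (lam g⁻¹ (b : B))) (rep μ) = lam g⁻¹ (b : B) :=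
      hcb μ _ (horb g⁻¹ μ b)
    have h2 : lam (c (b : B)) (rep μ) = (b : B) := hcb μ _ (hmem μ b)
    simp only [map_mul, map_inv, Equiv.Perm.mul_apply] at h1 ⊢
    rw [h1, show (lam g) ((lam g)⁻¹ (b : B)) = (b : B) from Equiv.apply_symm_apply (lam g) (b : B)]
    exact (Equiv.Perm.inv_eq_iff_eq).mpr h2.symm
  refine ⟨MonoidHom.mk' (fun g =>
      ⟨fun μ b => ⟨ExistsMonoAux.permOf t lam hlam _ _ (hfix g μ b),
        ExistsMonoAux.permOf_mem t lam hlam _ _ (hfix g μ b)⟩,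
      lam.rangeRestrict g⟩) ?_, ?_, fun g => rfl⟩
  · intro g₁ g₂
    refine SemidirectProduct.ext ?_ (map_mul _ _ _)
    funext μ b
    refine Subtype.ext (Equiv.ext fun x => Subtype.ext ?_)
    show ((c (b : B))⁻¹ * (g₁ * g₂) * c (lam (g₁ * g₂)⁻¹ (b : B))) • (x : X)
      = ((c (b : B))⁻¹ * g₁ * c (lam g₁⁻¹ (b : B))) •
        (((c ((lam g₁)⁻¹ (b : B)))⁻¹ * g₂ * c (lam g₂⁻¹ ((lam g₁)⁻¹ (b : B)))) • (x : X))
    rw [← mul_smul]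
    have e : lam g₁⁻¹ (b : B) = (lam g₁)⁻¹ (b : B) := by rw [map_inv]
    have e2 : lam (g₁ * g₂)⁻¹ (b : B) = lam g₂⁻¹ ((lam g₁)⁻¹ (b : B)) := by
      simp [map_inv, map_mul, mul_inv_rev, Equiv.Perm.mul_apply]
    rw [e, e2]
    congr 1
    group
  · rw [injective_iff_map_eq_one]
    intro g hg
    have hL := congrArg SemidirectProduct.left hg
    have hR := congrArg SemidirectProduct.right hg
    have hg1 : lam g = 1 := by
      have := congrArg (Subtype.val) hR
      simpa using this
    refine hfaith g fun x => ?_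
    obtain ⟨b, hb, -⟩ := hpart x
    set μ : MulAction.orbitRel.Quotient ↥lam.range B := Quotient.mk'' b with hμ
    have hbo : b ∈ μ.orbit := MulAction.orbitRel.Quotient.mem_orbit.mpr rfl
    have hpt : ∀ y : ↥(t (rep μ)),
        ((c b)⁻¹ * g * c (lam g⁻¹ b)) • (y : X) = (y : X) := by
      intro y
      have h5 := congrArg (fun f => ((f μ ⟨b, hbo⟩ : Equiv.Perm ↥(t (rep μ))) y : X)) hL
      exact h5
    have hginv : lam g⁻¹ b = b := by rw [map_inv, hg1]; rfl
    have hxb : x ∈ t (lam (c b) (rep μ)) := by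
      rw [hcb μ b hμ.symm]; exact hb
    rw [← hlam (c b) (rep μ)] at hxb
    obtain ⟨y, hy, hyx⟩ := hxb
    have h6 := hpt ⟨y, hy⟩
    rw [hginv] at h6
    have h7 : g • (c b • y) = c b • y := by
      have := congrArg (fun z => c b • z) h6
      simpa [mul_smul] using this
    simp only at hyx
    rw [← hyx]
    exact h7
end

section
/- Let T be a finite tree, uv an edge of T, and g an automorphism of T with g(u) = u and g(v) = v. Then g(T_{u,v}) = T_{u,v} and g(T_{v,u}) = T_{v,u}; the map r_{uv}(g), defined to equal g on T_{u,v} and the identity on T_{v,u}, is a well-defined automorphism of T; and g = r_{uv}(g) ∘ r_{vu}(g). -/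
/-- The automorphism group of a simple graph, as a subgroup of the permutation group
of the vertices. -/
def graphAut {V : Type} (T : SimpleGraph V) : Subgroup (Equiv.Perm V) where
  carrier := {g | ∀ x y : V, T.Adj (g x) (g y) ↔ T.Adj x y}
  one_mem' := by intro x y; simp
  mul_mem' := by
    intro a b ha hb x y
    simp only [Equiv.Perm.mul_apply]
    rw [ha, hb]
  inv_mem' := by
    intro a ha x y
    rw [← ha (a⁻¹ x) (a⁻¹ y)]
    simp

/-- The vertex set of the subtree `T_{u,v}` growing out of the vertex `u` towards `v`:
`u` together with all vertices reachable from `v` by a walk avoiding `u`. -/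
def sideSet {V : Type} (T : SimpleGraph V) (u v : V) : Set V :=
  insert u {w | ∃ p : T.Walk v w, u ∉ p.support}

/-- The vertex set of the subtree `T̂_{u,v}`: the connected component of `v` in `T - u`. -/
def hatSide {V : Type} (T : SimpleGraph V) (u v : V) : Set V :=
  {w | ∃ p : T.Walk v w, u ∉ p.support}

/-- `h` is the automorphism `r_{uv}(g)`: it agrees with `g` on `T_{u,v}` and is the identity
on `T_{v,u}`. -/
def IsRestr {V : Type} (T : SimpleGraph V) (u v : V) (g h : Equiv.Perm V) : Prop :=
  (∀ w ∈ sideSet T u v, h w = g w) ∧ (∀ w ∈ sideSet T v u, h w = w)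

/-- `t`-decomposability of the action of a group `S` of automorphisms of `T`:
for every edge `uv` and every `g ∈ S` fixing both `u` and `v`, the automorphism `r_{uv}(g)`
again belongs to `S`. -/
def TDecomposable {V : Type} (T : SimpleGraph V) (S : Subgroup (Equiv.Perm V)) : Prop :=
  ∀ u v : V, T.Adj u v → ∀ g ∈ S, g u = u → g v = v → ∃ h ∈ S, IsRestr T u v g h

open SimpleGraph

section Aux
variable {V : Type} {T : SimpleGraph V} {u v : V} {g : Equiv.Perm V}

lemma hat_mapsTo (hg : ∀ x y : V, T.Adj (g x) (g y) ↔ T.Adj x y)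
    (hu : g u = u) (hv : g v = v) : ⇑g '' hatSide T u v ⊆ hatSide T u v := by
  rintro _ ⟨w, ⟨p, hp⟩, rfl⟩
  refine ⟨(p.map ⟨⇑g, fun {a b} h => (hg a b).mpr h⟩).copy hv rfl, ?_⟩
  rw [SimpleGraph.Walk.support_copy, SimpleGraph.Walk.support_map]
  intro hmem
  simp only [List.mem_map] at hmem
  obtain ⟨x, hx, hgx⟩ := hmem
  exact hp (by rwa [← g.injective (hgx.trans hu.symm)])

lemma hat_image_eq (hg : ∀ x y : V, T.Adj (g x) (g y) ↔ T.Adj x y)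
    (hu : g u = u) (hv : g v = v) : ⇑g '' hatSide T u v = hatSide T u v := by
  have hg' : ∀ x y : V, T.Adj (g⁻¹ x) (g⁻¹ y) ↔ T.Adj x y := by
    intro x y
    rw [← hg (g⁻¹ x) (g⁻¹ y)]; simp
  have hu' : g⁻¹ u = u := by conv_lhs => rw [← hu]; simp
  have hv' : g⁻¹ v = v := by conv_lhs => rw [← hv]; simp
  apply subset_antisymm (hat_mapsTo hg hu hv)
  intro w hw
  exact ⟨g⁻¹ w, hat_mapsTo hg' hu' hv' ⟨w, hw, rfl⟩, by simp⟩

lemma adj_closed {x y : V} (hx : x ∈ hatSide T u v) (hxy : T.Adj x y) (hyu : y ≠ u) :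
    y ∈ hatSide T u v := by
  obtain ⟨p, hp⟩ := hx
  refine ⟨p.concat hxy, ?_⟩
  rw [SimpleGraph.Walk.support_concat]
  simp only [List.concat_eq_append, List.mem_append, List.mem_singleton]
  rintro (h | h)
  · exact hp h
  · exact hyu h.symm

lemma u_not_mem_hat : u ∉ hatSide T u v := by
  rintro ⟨p, hp⟩
  exact hp p.end_mem_support

lemma v_mem_hat (hne : u ≠ v) : v ∈ hatSide T u v :=
  ⟨SimpleGraph.Walk.nil, by simp [hne]⟩

lemma hat_disjoint (hT : T.IsTree) (huv : T.Adj u v) {w : V}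
    (h1 : w ∈ hatSide T u v) : w ∉ hatSide T v u := by
  rintro ⟨q, hq⟩
  obtain ⟨p, hp⟩ := h1
  have hbridge := (isAcyclic_iff_forall_adj_isBridge.mp hT.IsAcyclic huv)
  rw [isBridge_iff] at hbridge
  apply hbridge
  have hr : ∀ e ∈ (p.append q.reverse).edges, e ∉ ({s(u, v)} : Set (Sym2 V)) := by
    intro e he
    rw [SimpleGraph.Walk.edges_append, List.mem_append] at he
    simp only [Set.mem_singleton_iff]
    rintro rfl
    rcases he with he | he
    · exact hp (p.fst_mem_support_of_mem_edges he)
    · rw [SimpleGraph.Walk.edges_reverse, List.mem_reverse] at he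
      exact hq (q.snd_mem_support_of_mem_edges he)
  exact ((p.append q.reverse).toDeleteEdges _ hr).reverse.reachable

lemma hat_cover (hT : T.IsTree) (huv : T.Adj u v) (w : V) :
    w ∈ hatSide T u v ∨ w ∈ hatSide T v u := by
  classical
  obtain ⟨p0⟩ := hT.isConnected.preconnected u w
  set p : T.Walk u w := (p0.toPath : T.Path u w).1 with hpdef
  have hpath : p.IsPath := (p0.toPath).2
  by_cases hvp : v ∈ p.support
  · left
    refine ⟨p.dropUntil v hvp, ?_⟩
    intro hu'
    have hspec := p.take_spec hvp
    have hnodup := hpath.support_nodup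
    rw [← hspec, SimpleGraph.Walk.support_append, List.nodup_append] at hnodup
    have hu1 : u ∈ (p.takeUntil v hvp).support := SimpleGraph.Walk.start_mem_support _
    rw [SimpleGraph.Walk.support_eq_cons (p.dropUntil v hvp), List.mem_cons] at hu'
    rcases hu' with h | h
    · exact huv.ne h
    · exact hnodup.2.2 u hu1 u h rfl
  · right
    exact ⟨p, hvp⟩

lemma mk_perm {A : Set V} (hA : ⇑g '' A = A) :
    ∃ h : Equiv.Perm V, (∀ w ∈ A, h w = g w) ∧ (∀ w ∉ A, h w = w) := by
  classical
  have h1 : ∀ w ∈ A, g w ∈ A := fun w hw => hA ▸ ⟨w, hw, rfl⟩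
  have h2 : ∀ w ∈ A, g⁻¹ w ∈ A := by
    intro w hw
    rw [← hA] at hw
    obtain ⟨x, hx, rfl⟩ := hw
    simpa using hx
  refine ⟨⟨fun w => if w ∈ A then g w else w, fun w => if w ∈ A then g⁻¹ w else w, ?_, ?_⟩,
    fun w hw => by show (if w ∈ A then g w else w) = g w; rw [if_pos hw],
    fun w hw => by show (if w ∈ A then g w else w) = w; rw [if_neg hw]⟩
  · intro w
    by_cases hw : w ∈ A
    · simp only [if_pos hw, if_pos (h1 w hw), Equiv.Perm.inv_def, Equiv.symm_apply_apply]
    · simp only [if_neg hw]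
  · intro w
    by_cases hw : w ∈ A
    · simp only [if_pos hw, if_pos (h2 w hw), if_pos (show g.symm w ∈ A from h2 w hw), Equiv.Perm.inv_def, Equiv.apply_symm_apply]
    · simp only [if_neg hw]

lemma mem_graphAut_restr (hT : T.IsTree) (huv : T.Adj u v)
    (hg : ∀ x y : V, T.Adj (g x) (g y) ↔ T.Adj x y)
    (hu : g u = u) (hv : g v = v) {h : Equiv.Perm V}
    (hA : ∀ w ∈ hatSide T u v, h w = g w) (hB : ∀ w ∉ hatSide T u v, h w = w) :
    ∀ x y : V, T.Adj (h x) (h y) ↔ T.Adj x y := by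
  have himg := hat_image_eq hg hu hv
  have hmem : ∀ x, x ∈ hatSide T u v → g x ∈ hatSide T u v :=
    fun x hx => himg ▸ ⟨x, hx, rfl⟩
  -- boundary: crossing edges must go to u
  have bdry : ∀ x y : V, x ∈ hatSide T u v → y ∉ hatSide T u v → T.Adj x y → y = u := by
    intro x y hx hy hxy
    by_contra hne
    exact hy (adj_closed hx hxy hne)
  intro x y
  by_cases hx : x ∈ hatSide T u v <;> by_cases hy : y ∈ hatSide T u v
  · rw [hA x hx, hA y hy, hg]
  · rw [hA x hx, hB y hy]
    constructor
    · intro hadj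
      have hyu : y = u := bdry (g x) y (hmem x hx) hy hadj
      rw [hyu]
      exact (hg x u).mp (by rw [hu, ← hyu]; exact hadj)
    · intro hadj
      have hyu : y = u := bdry x y hx hy hadj
      have h2 : T.Adj (g x) (g u) := (hg x u).mpr (hyu ▸ hadj)
      rw [hu] at h2
      rwa [hyu]
  · rw [hB x hx, hA y hy]
    constructor
    · intro hadj
      have hxu : x = u := bdry (g y) x (hmem y hy) hx hadj.symm
      rw [hxu]
      exact (hg u y).mp (by rw [hu, ← hxu]; exact hadj)
    · intro hadj
      have hxu : x = u := bdry y x hy hx hadj.symm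
      have h2 : T.Adj (g u) (g y) := (hg u y).mpr (hxu ▸ hadj)
      rw [hu] at h2
      rw [hxu]
      exact h2
  · rw [hB x hx, hB y hy]

end Aux

/-- For a finite tree `T`, an edge `uv` and an automorphism `g` fixing `u` and `v`:
both subtrees `T_{u,v}` and `T_{v,u}` are `g`-invariant, the map `r_{uv}(g)` (equal to `g` on
`T_{u,v}` and the identity on `T_{v,u}`) is a well-defined automorphism of `T`, and
`g = r_{uv}(g) ∘ r_{vu}(g)`. -/
theorem restr_exists {V : Type} [Fintype V] (T : SimpleGraph V) (hT : T.IsTree)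
    (u v : V) (huv : T.Adj u v) (g : Equiv.Perm V) (hg : g ∈ graphAut T)
    (hu : g u = u) (hv : g v = v) :
    (⇑g '' sideSet T u v = sideSet T u v) ∧ (⇑g '' sideSet T v u = sideSet T v u) ∧
    ∃ h₁ h₂ : Equiv.Perm V, h₁ ∈ graphAut T ∧ h₂ ∈ graphAut T ∧
      IsRestr T u v g h₁ ∧ IsRestr T v u g h₂ ∧ g = h₁ * h₂ := by
    classical
  have hg' : ∀ x y : V, T.Adj (g x) (g y) ↔ T.Adj x y := hg
  have hAeq := hat_image_eq (u := u) (v := v) hg' hu hv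
  have hBeq := hat_image_eq (u := v) (v := u) hg' hv hu
  have hside1 : ⇑g '' sideSet T u v = sideSet T u v := by
    show ⇑g '' insert u (hatSide T u v) = insert u (hatSide T u v)
    rw [Set.image_insert_eq, hu, hAeq]
  have hside2 : ⇑g '' sideSet T v u = sideSet T v u := by
    show ⇑g '' insert v (hatSide T v u) = insert v (hatSide T v u)
    rw [Set.image_insert_eq, hv, hBeq]
  obtain ⟨h₁, h₁A, h₁B⟩ := mk_perm hAeq
  obtain ⟨h₂, h₂A, h₂B⟩ := mk_perm hBeq
  refine ⟨hside1, hside2, h₁, h₂,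
    mem_graphAut_restr hT huv hg' hu hv h₁A h₁B,
    mem_graphAut_restr hT huv.symm hg' hv hu h₂A h₂B, ?_, ?_, ?_⟩
  · constructor
    · intro w hw
      rcases Set.mem_insert_iff.mp (show _ ∈ insert _ (hatSide T _ _) from hw) with rfl | hw
      · rw [h₁B w u_not_mem_hat, hu]
      · exact h₁A w hw
    · intro w hw
      rcases Set.mem_insert_iff.mp (show _ ∈ insert _ (hatSide T _ _) from hw) with rfl | hw
      · rw [h₁A w (v_mem_hat huv.ne), hv]
      · exact h₁B w fun hA => hat_disjoint hT huv hA hw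
  · constructor
    · intro w hw
      rcases Set.mem_insert_iff.mp (show _ ∈ insert _ (hatSide T _ _) from hw) with rfl | hw
      · rw [h₂B w u_not_mem_hat, hv]
      · exact h₂A w hw
    · intro w hw
      rcases Set.mem_insert_iff.mp (show _ ∈ insert _ (hatSide T _ _) from hw) with rfl | hw
      · rw [h₂A w (v_mem_hat huv.ne'), hu]
      · exact h₂B w fun hB => hat_disjoint hT huv hw hB
  · ext w
    rw [Equiv.Perm.mul_apply]
    by_cases hw : w ∈ hatSide T v u
    · have hgw : g w ∈ hatSide T v u := hBeq ▸ ⟨w, hw, rfl⟩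
      rw [h₂A w hw, h₁B (g w) fun hA => hat_disjoint hT huv hA hgw]
    · have hwA : w ∈ hatSide T u v := by
        rcases hat_cover hT huv w with h | h
        · exact h
        · exact absurd h hw
      rw [h₂B w hw, h₁A w hwA]
end

section
/- Let T be a finite tree and G ≤ Aut(T) with a t-decomposable action, and let uv be an edge. Then: (i) the induced action of the subgroup S_{u→v} on T is t-decomposable; (ii) if moreover G = S_{u→v} (so that G fixes T_{v,u} pointwise), then the induced action of G on the subtree T̂_{u,v} is t-decomposable. -/
/-- The support of `g` (as a set of vertices and edges of `T`) is contained in the set of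
vertices `A` (and the edges spanned by it). -/
def SuppIn {V : Type} (T : SimpleGraph V) (g : Equiv.Perm V) (A : Set V) : Prop :=
  (∀ w : V, g w ≠ w → w ∈ A) ∧
  (∀ x y : V, T.Adj x y → s(g x, g y) ≠ s(x, y) → x ∈ A ∧ y ∈ A)

/-- The subgroup `S_{u→v}` of all elements of `S` supported in `T̂_{u,v}`. -/
def sArrow {V : Type} (T : SimpleGraph V) (S : Subgroup (Equiv.Perm V)) (hS : S ≤ graphAut T)
    (u v : V) : Subgroup (Equiv.Perm V) where
  carrier := {g | g ∈ S ∧ SuppIn T g (hatSide T u v)}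
  one_mem' := ⟨S.one_mem, fun w hw => absurd rfl hw, fun x y _ hxy => absurd rfl hxy⟩
  mul_mem' := by
    rintro g h ⟨hgS, hgv, hge⟩ ⟨hhS, hhv, hhe⟩
    refine ⟨S.mul_mem hgS hhS, fun w hw => ?_, fun x y hadj hne => ?_⟩
    · by_cases hhw : h w = w
      · exact hgv w (by simpa [Equiv.Perm.mul_apply, hhw] using hw)
      · exact hhv w hhw
    · by_cases hcase : s(h x, h y) = s(x, y)
      · rcases Sym2.eq_iff.mp hcase with ⟨hx, hy⟩ | ⟨hx, hy⟩
        · refine hge x y hadj ?_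
          simpa [Equiv.Perm.mul_apply, hx, hy] using hne
        · have hxy : x ≠ y := T.ne_of_adj hadj
          exact ⟨hhv x (by rw [hx]; exact hxy.symm), hhv y (by rw [hy]; exact hxy)⟩
      · exact hhe x y hadj hcase
  inv_mem' := by
    rintro g ⟨hgS, hgv, hge⟩
    refine ⟨S.inv_mem hgS, fun w hw => ?_, fun x y hadj hne => ?_⟩
    · refine hgv w fun hgw => hw ?_
      calc g⁻¹ w = g⁻¹ (g w) := by rw [hgw]
      _ = w := Equiv.symm_apply_apply g w
    · have hg' : g⁻¹ ∈ graphAut T := Subgroup.inv_mem _ (hS hgS)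
      have hadj' : T.Adj (g⁻¹ x) (g⁻¹ y) := (hg' x y).mpr hadj
      have hmoved : s(g (g⁻¹ x), g (g⁻¹ y)) ≠ s(g⁻¹ x, g⁻¹ y) := by
        simp only [Equiv.Perm.coe_inv, Equiv.apply_symm_apply]
        exact fun hh => hne hh.symm
      have h2 := hge (g⁻¹ x) (g⁻¹ y) hadj' hmoved
      constructor
      · by_cases hx : g⁻¹ x = x
        · rw [← hx]; exact h2.1
        · refine hgv x fun hgx => hx ?_
          calc g⁻¹ x = g⁻¹ (g x) := by rw [hgx]
          _ = x := Equiv.symm_apply_apply g x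
      · by_cases hy : g⁻¹ y = y
        · rw [← hy]; exact h2.2
        · refine hgv y fun hgy => hy ?_
          calc g⁻¹ y = g⁻¹ (g y) := by rw [hgy]
          _ = y := Equiv.symm_apply_apply g y

/-- The group of permutations of a subset `A ⊆ V` induced by the elements of `S`. -/
def restrictedTo {V : Type} (S : Subgroup (Equiv.Perm V)) (A : Set V) :
    Subgroup (Equiv.Perm ↥A) where
  carrier := {σ | ∃ g ∈ S, ∀ x : ↥A, (σ x : V) = g (x : V)}
  one_mem' := ⟨1, S.one_mem, fun _ => rfl⟩
  mul_mem' := by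
    rintro σ τ ⟨g, hgS, hg⟩ ⟨k, hkS, hk⟩
    refine ⟨g * k, S.mul_mem hgS hkS, fun x => ?_⟩
    have h1 : ((σ * τ) x : V) = (σ (τ x) : V) := rfl
    rw [h1, hg (τ x), hk x]
    rfl
  inv_mem' := by
    rintro σ ⟨g, hgS, hg⟩
    refine ⟨g⁻¹, S.inv_mem hgS, fun x => ?_⟩
    have h1 : (x : V) = g ((σ⁻¹ x : ↥A) : V) := by
      have h2 := hg (σ⁻¹ x)
      rwa [Equiv.Perm.coe_inv, Equiv.apply_symm_apply] at h2
    rw [h1]; exact (Equiv.symm_apply_apply g _).symm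

/-- In a connected graph, every vertex lies on one of the two sides of an edge `ab`. -/
lemma side_cover {V : Type} (T : SimpleGraph V) (hc : T.Connected) {a b : V} (hab : a ≠ b)
    (w : V) : w ∈ sideSet T a b ∨ w ∈ sideSet T b a := by
  haveI := Classical.decEq V
  obtain ⟨p⟩ := hc a w
  let q : T.Walk a w := (p.toPath : SimpleGraph.Path T a w)
  have hq : q.IsPath := (p.toPath).2
  by_cases hb : b ∈ q.support
  · left
    refine Or.inr ⟨q.dropUntil b hb, fun ha => ?_⟩
    have hnd := hq.support_nodup
    rw [← SimpleGraph.Walk.take_spec q hb, SimpleGraph.Walk.support_append] at hnd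
    have hdisj := List.disjoint_of_nodup_append hnd
    have ha' : a ∈ (q.dropUntil b hb).support := ha
    rw [SimpleGraph.Walk.support_eq_cons] at ha'
    rcases List.mem_cons.mp ha' with h1 | h1
    · exact hab h1
    · exact hdisj (SimpleGraph.Walk.start_mem_support _) h1
  · exact Or.inr (Or.inr ⟨q, hb⟩)

/-- Side sets of the induced subgraph embed into side sets of the ambient graph. -/
lemma side_lift {V : Type} (T : SimpleGraph V) (A : Set V) (a b w : ↥A)
    (hw : w ∈ sideSet (SimpleGraph.induce A T) a b) : (w : V) ∈ sideSet T ↑a ↑b := by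
  rcases hw with hw | ⟨p, hp⟩
  · exact Or.inl (congrArg Subtype.val hw)
  · refine Or.inr ⟨p.map (SimpleGraph.Embedding.induce A).toHom, fun ha => ?_⟩
    erw [SimpleGraph.Walk.support_map] at ha
    obtain ⟨x, hx, hxa⟩ := List.mem_map.mp ha
    have hxeq : x = a := Subtype.ext hxa
    exact hp (hxeq ▸ hx)

/-- For a `t`-decomposable action: (i) the induced action of the subgroup `S_{u→v}` on `T`
is `t`-decomposable; (ii) if `G = S_{u→v}`, then the induced action of `G` on the subtree
`T̂_{u,v}` is `t`-decomposable. -/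
theorem sArrow_tDecomposable {V : Type} [Fintype V] (T : SimpleGraph V) (hT : T.IsTree)
    (S : Subgroup (Equiv.Perm V)) (hS : S ≤ graphAut T) (htd : TDecomposable T S)
    (u v : V) (huv : T.Adj u v) :
    TDecomposable T (sArrow T S hS u v) ∧
    (S = sArrow T S hS u v →
      TDecomposable (SimpleGraph.induce (hatSide T u v) T)
        (restrictedTo S (hatSide T u v))) := by
  have hc := hT.isConnected
  constructor
  · intro a b hab g hg hga hgb
    obtain ⟨hgS, hgv, hge⟩ := hg
    obtain ⟨h, hhS, hres⟩ := htd a b hab g hgS hga hgb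
    have key : ∀ w, h w = w ∨ h w = g w := fun w => by
      rcases side_cover T hc (T.ne_of_adj hab) w with hw | hw
      · exact Or.inr (hres.1 w hw)
      · exact Or.inl (hres.2 w hw)
    refine ⟨h, ⟨hhS, fun w hw => ?_, fun x y hadj hne => ?_⟩, hres⟩
    · rcases key w with h1 | h1
      · exact absurd h1 hw
      · exact hgv w (h1 ▸ hw)
    · rcases key x with hx | hx <;> rcases key y with hy | hy
      · exact absurd (by rw [hx, hy]) hne
      · have hgy : g y ≠ y := fun h0 => hne (by rw [hx, hy, h0])
        by_cases hgx : g x = x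
        · refine hge x y hadj fun hcon => hne ?_
          rw [hx, hy]
          rw [hgx] at hcon
          exact hcon
        · exact ⟨hgv x hgx, hgv y hgy⟩
      · have hgx : g x ≠ x := fun h0 => hne (by rw [hx, hy, h0])
        by_cases hgy : g y = y
        · refine hge x y hadj fun hcon => hne ?_
          rw [hx, hy]
          rw [hgy] at hcon
          exact hcon
        · exact ⟨hgv x hgx, hgv y hgy⟩
      · refine hge x y hadj fun hcon => hne ?_
        rw [hx, hy]
        exact hcon
  · intro hEq
    have memA : ∀ g ∈ S, ∀ x : V, x ∈ hatSide T u v ↔ g x ∈ hatSide T u v := by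
      intro g hgS x
      constructor
      · intro hx
        by_cases hfix : g x = x
        · rwa [hfix]
        · have hg' : g⁻¹ ∈ sArrow T S hS u v := hEq ▸ S.inv_mem hgS
          refine hg'.2.1 (g x) fun h0 => hfix ?_
          rw [Equiv.Perm.coe_inv, Equiv.symm_apply_apply] at h0
          exact h0.symm
      · intro hgx
        by_contra hx
        have hg' : g ∈ sArrow T S hS u v := hEq ▸ hgS
        have hfix : g x = x := by
          by_contra h0
          exact hx (hg'.2.1 x h0)
        rw [hfix] at hgx
        exact hx hgx
    intro a b hab σ hσ hσa hσb
    obtain ⟨g, hgS, hg⟩ := hσ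
    have hadjV : T.Adj ↑a ↑b := hab
    have hga : g ↑a = ↑a := by rw [← hg a, hσa]
    have hgb : g ↑b = ↑b := by rw [← hg b, hσb]
    obtain ⟨h, hhS, hres⟩ := htd ↑a ↑b hadjV g hgS hga hgb
    have hhA := memA h hhS
    refine ⟨Equiv.Perm.subtypePerm h (fun x => (hhA x).symm), ⟨h, hhS, fun x => rfl⟩, fun w hw => ?_, fun w hw => ?_⟩
    · apply Subtype.ext
      show h ↑w = ↑(σ w)
      rw [hg w]
      exact hres.1 ↑w (side_lift T _ a b w hw)
    · apply Subtype.ext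
      exact hres.2 ↑w (side_lift T _ b a w hw)
end
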